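/- arXiv:2304.12967 — 2 statements merged into one kernel-verified Lean document; each statement's English description precedes it below -/
import Mathlib

section
/- (Independence of the union of independent slices) Assume every singleton {i}, i ∈ [n], is independent. Then a set S ⊆ [n] is independent if and only if, for every profit value q ∈ ℕ, the slice {i ∈ S : p_i = q} is independent. -/
/-!
Independence is hereditary, since adding an item raises `γ` by at most its profit. So if `S` is
dependent it contains a minimal dependent set `C`, which is nonempty because `γ ∅ = 0`. For every
`j ∈ C` the set `C.erase j` is independent while `C` is not, so adding `j` back must contribute `0`;
hence the deficiency `∑ i ∈ C, p i - γ C` equals `p j` for every `j ∈ C`. All items of `C` therefore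
share one profit `q`, and `C` is a dependent subset of the slice of `S` at `q`.
-/

open Finset

/-- A set `S` is independent if `γ S = ∑ i ∈ S, p i`. -/
def AoNIndep {n : ℕ} (γ : Finset (Fin n) → ℕ) (p : Fin n → ℕ) (S : Finset (Fin n)) : Prop :=
  γ S = ∑ i ∈ S, p i

def IsAllOrNothing {α : Type*} [DecidableEq α] (γ : Finset α → ℕ) (p : α → ℕ) : Prop :=
  ∀ (i : α) (S : Finset α), γ (insert i S) = γ S ∨ γ (insert i S) = γ S + p i

lemma IsAllOrNothing.union_le_add_sum {α : Type*} [DecidableEq α] {γ : Finset α → ℕ} {p : α → ℕ}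
    (haon : IsAllOrNothing γ p) (T A : Finset α) : γ (T ∪ A) ≤ γ T + ∑ i ∈ A, p i := by
  induction A using Finset.induction with
  | empty => simp
  | insert a A ha ih =>
    rw [union_insert, sum_insert ha]
    rcases haon a (T ∪ A) with h | h <;> omega

section Indep

variable {n : ℕ} {γ : Finset (Fin n) → ℕ} {p : Fin n → ℕ}

lemma AoNIndep.subset (hγ0 : γ ∅ = 0) (haon : IsAllOrNothing γ p) {S T : Finset (Fin n)}
    (hS : AoNIndep γ p S) (hTS : T ⊆ S) : AoNIndep γ p T := by
  have hS_le : γ S ≤ γ T + ∑ i ∈ S \ T, p i := by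
    simpa [union_sdiff_of_subset hTS] using haon.union_le_add_sum T (S \ T)
  have hT_le : γ T ≤ ∑ i ∈ T, p i := by
    simpa [hγ0] using haon.union_le_add_sum ∅ T
  have hsum := sum_sdiff hTS (f := p)
  unfold AoNIndep at hS ⊢
  omega

lemma deficiency_eq_of_erase_indep (haon : IsAllOrNothing γ p) {C : Finset (Fin n)}
    (hC : ¬ AoNIndep γ p C) {j : Fin n} (hj : j ∈ C) (hCj : AoNIndep γ p (C.erase j)) :
    γ C + p j = ∑ i ∈ C, p i := by
  have hsum := sum_erase_add C p hj
  have hins := haon j (C.erase j)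
  rw [insert_erase hj] at hins
  unfold AoNIndep at hC hCj
  omega

lemma profit_eq_of_minimal_dependent (haon : IsAllOrNothing γ p) {C : Finset (Fin n)}
    (hC : Minimal (fun T => ¬ AoNIndep γ p T) C) {i j : Fin n} (hi : i ∈ C) (hj : j ∈ C) :
    p i = p j := by
  have erase_indep : ∀ k ∈ C, AoNIndep γ p (C.erase k) := fun k hk =>
    not_not.mp (hC.not_prop_of_lt (erase_ssubset hk))
  have hi' := deficiency_eq_of_erase_indep haon hC.prop hi (erase_indep i hi)
  have hj' := deficiency_eq_of_erase_indep haon hC.prop hj (erase_indep j hj)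
  omega

end Indep

theorem indep_iff_slices_indep_general {n : ℕ} (γ : Finset (Fin n) → ℕ) (p : Fin n → ℕ)
    (hγ0 : γ ∅ = 0)
    (haon : ∀ (i : Fin n) (S : Finset (Fin n)),
      γ (insert i S) = γ S ∨ γ (insert i S) = γ S + p i)
    (S : Finset (Fin n)) :
    AoNIndep γ p S ↔ ∀ q : ℕ, AoNIndep γ p (S.filter (fun i => p i = q)) := by
  refine ⟨fun hS q => hS.subset hγ0 haon (filter_subset _ S), fun hslices => ?_⟩
  by_contra hS
  obtain ⟨C, hCS, hCmin⟩ := exists_minimal_le_of_wellFoundedLT (fun T => ¬ AoNIndep γ p T) S hS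
  obtain ⟨i, hi⟩ : C.Nonempty := nonempty_iff_ne_empty.mpr <| by
    rintro rfl
    exact hCmin.prop (by simp [AoNIndep, hγ0])
  have hC_slice : C ⊆ S.filter (fun j => p j = p i) := fun j hj =>
    mem_filter.mpr ⟨hCS hj, profit_eq_of_minimal_dependent haon hCmin hj hi⟩
  exact hCmin.prop ((hslices (p i)).subset hγ0 haon hC_slice)

theorem indep_iff_slices_indep {n : ℕ} (γ : Finset (Fin n) → ℕ) (p : Fin n → ℕ)
    (hp : ∀ i, 1 ≤ p i)
    (hγ0 : γ ∅ = 0)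
    (hmono : ∀ S T : Finset (Fin n), S ⊆ T → γ S ≤ γ T)
    (hsub : ∀ S T : Finset (Fin n), S ⊆ T → ∀ i : Fin n,
      γ (insert i S) + γ T ≥ γ (insert i T) + γ S)
    (haon : ∀ (i : Fin n) (S : Finset (Fin n)),
      γ (insert i S) = γ S ∨ γ (insert i S) = γ S + p i)
    (hsingle : ∀ i : Fin n, AoNIndep γ p {i})
    (S : Finset (Fin n)) :
    AoNIndep γ p S ↔ ∀ q : ℕ, AoNIndep γ p (S.filter (fun i => p i = q)) :=
  indep_iff_slices_indep_general γ p hγ0 haon S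
end

section
/- (Optimality of independence) For every feasible chain 𝒮 = (S_1, …, S_T) there exists a feasible independent chain 𝒮' = (S'_1, …, S'_T) with S'_t ⊆ S_t for every t ∈ [T] and Φ(𝒮') ≥ Φ(𝒮). In particular, there is an optimal feasible chain that is independent. -/
open Finset

/-!
Submodularity and monotonicity give augmentation: if `γ B < γ A`, some `i ∈ A` strictly increases
`γ B` when added, and by the all-or-nothing property it increases it by exactly `p i`, so adding `i`
keeps `B` independent. Hence every independent `B ⊆ A` extends inside `A` to an independent set of
the same value as `A`. Extending period by period along the chain gives an independent chain
`S'_t ⊆ S_t` with `γ (S'_t) = γ (S_t)`; it is feasible because weights are nonnegative, and it has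
the same profit.
-/

theorem exists_monotone_nat_extension {β : Type*} [Preorder β] [OrderTop β] {T : ℕ}
    {S : Fin T → β} (hS : Monotone S) : ∃ A : ℕ → β, Monotone A ∧ ∀ t : Fin T, A t = S t := by
  refine ⟨fun t => if h : t < T then S ⟨t, h⟩ else ⊤, fun t t' htt' => ?_, fun t => dif_pos t.isLt⟩
  by_cases ht' : t' < T
  · simp only [dif_pos ht', dif_pos (htt'.trans_lt ht')]
    exact hS htt'
  · simp only [dif_neg ht']
    exact le_top

section

variable {α : Type*} [DecidableEq α] {γ : Finset α → ℕ}

def DiminishingReturns (γ : Finset α → ℕ) : Prop :=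
  ∀ S T : Finset α, S ⊆ T → ∀ i : α, γ (insert i S) + γ T ≥ γ (insert i T) + γ S

def AllOrNothing (γ : Finset α → ℕ) (p : α → ℕ) : Prop :=
  ∀ (i : α) (S : Finset α), γ (insert i S) = γ S ∨ γ (insert i S) = γ S + p i

theorem rank_union_eq_of_forall_insert_eq (hmono : Monotone γ) (hsub : DiminishingReturns γ)
    {B : Finset α} (D : Finset α) (hD : ∀ i ∈ D, γ (insert i B) = γ B) :
    γ (B ∪ D) = γ B := by
  induction D using Finset.induction_on with
  | empty => rw [union_empty]
  | insert j D _ ih =>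
    have hDB : γ (B ∪ D) = γ B := ih fun i hi => hD i (mem_insert_of_mem hi)
    have hjB : γ (insert j B) = γ B := hD j (mem_insert_self j D)
    have hle := hsub B (B ∪ D) subset_union_left j
    have hge : γ (B ∪ D) ≤ γ (insert j (B ∪ D)) := hmono (subset_insert j _)
    rw [union_insert]
    omega

theorem exists_mem_rank_lt_insert (hmono : Monotone γ) (hsub : DiminishingReturns γ)
    {A B : Finset α} (h : γ B < γ A) : ∃ i ∈ A, γ B < γ (insert i B) := by
  by_contra! hflat
  have hAB : γ (B ∪ A) = γ B := rank_union_eq_of_forall_insert_eq hmono hsub A fun i hi =>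
    le_antisymm (hflat i hi) (hmono (subset_insert i B))
  have := hmono (subset_union_right (s₁ := B) (s₂ := A))
  omega

theorem insert_indep_of_rank_lt {p : α → ℕ}
    (haon : AllOrNothing γ p)
    {B : Finset α} {i : α} (hB : γ B = ∑ j ∈ B, p j) (h : γ B < γ (insert i B)) :
    γ (insert i B) = ∑ j ∈ insert i B, p j := by
  have hi : i ∉ B := fun hi => (insert_eq_of_mem hi ▸ h).false
  rw [sum_insert hi, ← hB]
  rcases haon i B with h' | h' <;> omega

theorem exists_indep_between_rank_eq {p : α → ℕ} (hmono : Monotone γ)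
    (hsub : DiminishingReturns γ)
    (haon : AllOrNothing γ p)
    {A B : Finset α} (hBA : B ⊆ A) (hB : γ B = ∑ i ∈ B, p i) :
    ∃ B', B ⊆ B' ∧ B' ⊆ A ∧ γ B' = ∑ i ∈ B', p i ∧ γ B' = γ A := by
  classical
  obtain ⟨B', hB'mem, hmax⟩ :=
    (A.powerset.filter fun C => B ⊆ C ∧ γ C = ∑ i ∈ C, p i).exists_max_image γ
      ⟨B, by simp [hBA, hB]⟩
  simp only [mem_filter, mem_powerset] at hB'mem hmax
  obtain ⟨hB'A, hBB', hB'⟩ := hB'mem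
  refine ⟨B', hBB', hB'A, hB', le_antisymm (hmono hB'A) (not_lt.mp fun hlt => ?_)⟩
  -- a maximiser of `γ` among independent sets between `B` and `A` cannot be augmented
  obtain ⟨i, hiA, hi⟩ := exists_mem_rank_lt_insert hmono hsub hlt
  have := hmax (insert i B') ⟨insert_subset hiA hB'A, hBB'.trans (subset_insert i B'),
    insert_indep_of_rank_lt haon hB' hi⟩
  omega

theorem exists_monotone_indep_rank_eq {p : α → ℕ} (hγ0 : γ ∅ = 0) (hmono : Monotone γ)
    (hsub : DiminishingReturns γ)
    (haon : AllOrNothing γ p)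
    {A : ℕ → Finset α} (hA : Monotone A) :
    ∃ B : ℕ → Finset α, Monotone B ∧
      ∀ t, B t ⊆ A t ∧ γ (B t) = ∑ i ∈ B t, p i ∧ γ (B t) = γ (A t) := by
  choose! extend hsup hextend using
    fun (A B : Finset α) => exists_indep_between_rank_eq (A := A) (B := B) hmono hsub haon
  let B : ℕ → Finset α := fun t =>
    Nat.rec (motive := fun _ => Finset α) (extend (A 0) ∅) (fun t Bt => extend (A (t + 1)) Bt) t
  have hB : ∀ t, B t ⊆ A t ∧ γ (B t) = ∑ i ∈ B t, p i ∧ γ (B t) = γ (A t) := by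
    intro t
    induction t with
    | zero => exact hextend _ _ (empty_subset _) (by rw [hγ0, sum_empty])
    | succ t ih => exact hextend _ _ (ih.1.trans (hA t.le_succ)) ih.2.1
  refine ⟨B, monotone_nat_of_le_succ fun t => ?_, hB⟩
  exact hsup _ _ ((hB t).1.trans (hA t.le_succ)) (hB t).2.1

end

theorem optimality_of_independence_general {n T : ℕ} (γ : Finset (Fin n) → ℕ)
    (p w : Fin n → ℕ) (W Δ : Fin T → ℕ)
    (hγ0 : γ ∅ = 0)
    (hmono : ∀ S T : Finset (Fin n), S ⊆ T → γ S ≤ γ T)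
    (hsub : ∀ S T : Finset (Fin n), S ⊆ T → ∀ i : Fin n,
      γ (insert i S) + γ T ≥ γ (insert i T) + γ S)
    (haon : ∀ (i : Fin n) (S : Finset (Fin n)),
      γ (insert i S) = γ S ∨ γ (insert i S) = γ S + p i)
    (S : Fin T → Finset (Fin n))
    (hchain : Monotone S)
    (hfeas : ∀ t, ∑ i ∈ S t, w i ≤ W t) :
    ∃ S' : Fin T → Finset (Fin n),
      Monotone S' ∧
      (∀ t, S' t ⊆ S t) ∧
      (∀ t, ∑ i ∈ S' t, w i ≤ W t) ∧
      (∀ t, AoNIndep γ p (S' t)) ∧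
      ∑ t, Δ t * γ (S t) ≤ ∑ t, Δ t * γ (S' t) := by
  obtain ⟨A, hA, hAS⟩ := exists_monotone_nat_extension hchain
  obtain ⟨B, hBmono, hB⟩ :=
    exists_monotone_indep_rank_eq (p := p) hγ0 (fun _ _ => hmono _ _) hsub haon hA
  refine ⟨fun t => B t, fun t t' htt' => hBmono htt', fun t => hAS t ▸ (hB t).1,
    fun t => (sum_le_sum_of_subset (hAS t ▸ (hB t).1)).trans (hfeas t), fun t => (hB t).2.1,
    (sum_congr rfl fun t _ => ?_).le⟩
  rw [(hB t).2.2, hAS t]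

theorem optimality_of_independence {n T : ℕ} (γ : Finset (Fin n) → ℕ)
    (p w : Fin n → ℕ) (W Δ : Fin T → ℕ)
    (hW : Monotone W)
    (hp : ∀ i, 1 ≤ p i)
    (hγ0 : γ ∅ = 0)
    (hmono : ∀ S T : Finset (Fin n), S ⊆ T → γ S ≤ γ T)
    (hsub : ∀ S T : Finset (Fin n), S ⊆ T → ∀ i : Fin n,
      γ (insert i S) + γ T ≥ γ (insert i T) + γ S)
    (haon : ∀ (i : Fin n) (S : Finset (Fin n)),
      γ (insert i S) = γ S ∨ γ (insert i S) = γ S + p i)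
    (S : Fin T → Finset (Fin n))
    (hchain : Monotone S)
    (hfeas : ∀ t, ∑ i ∈ S t, w i ≤ W t) :
    ∃ S' : Fin T → Finset (Fin n),
      Monotone S' ∧
      (∀ t, S' t ⊆ S t) ∧
      (∀ t, ∑ i ∈ S' t, w i ≤ W t) ∧
      (∀ t, AoNIndep γ p (S' t)) ∧
      ∑ t, Δ t * γ (S t) ≤ ∑ t, Δ t * γ (S' t) :=
  optimality_of_independence_general γ p w W Δ hγ0 hmono hsub haon S hchain hfeas
end
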